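/- Define the error set Ξ = {v ∈ ℝ^p : (1/2)·‖v‖ + ‖β⋆‖ ≥ ‖β⋆ + v‖}. Suppose λ ≥ ‖(2/n)·Xᵀε‖⋆, that α > 0 satisfies the restricted eigenvalue condition (1/n)·‖Xu‖₂² ≥ α·‖u‖₂² for all u ∈ Ξ, and that ψ ≥ 0 satisfies the restricted norm compatibility condition ‖u‖ ≤ ψ·‖u‖₂ for all u ∈ Ξ. Then the regularized least-squares minimizer β̂ satisfies ‖β̂ − β⋆‖ ≤ 3λψ²/α and ‖β̂ − β⋆‖₂ ≤ 3λψ/α. -/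

import Mathlib

open Metric Set

noncomputable section

/-- Euclidean space `ℝ^p`. -/
abbrev E (p : ℕ) := EuclideanSpace ℝ (Fin p)

/-- Matrix-vector multiplication, valued in Euclidean space. -/
def mulVecE {n p : ℕ} (X : Matrix (Fin n) (Fin p) ℝ) (v : E p) : E n :=
  WithLp.toLp 2 (X.mulVec v)

/-- The dual norm of a norm `N` on `ℝ^p`: `‖θ‖⋆ = sup {⟨θ, β⟩ : N β ≤ 1}`. -/
def dualOf {p : ℕ} (N : E p → ℝ) (θ : E p) : ℝ :=
  sSup ((fun β => (inner ℝ θ β : ℝ)) '' {β | N β ≤ 1})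

/-- The error set `Ξ(β⋆; ‖·‖) = {v : (1/2)‖v‖ + ‖β⋆‖ ≥ ‖β⋆ + v‖}`. -/
def errSet {p : ℕ} (N : E p → ℝ) (βstar : E p) : Set (E p) :=
  {v | (1 / 2 : ℝ) * N v + N βstar ≥ N (βstar + v)}

/-!
Write `v = βhat - βstar`. Testing the optimality of `βhat` against `βstar` gives the basic
inequality `(1/n)‖Xv‖₂² ≤ ⟪(2/n) Xᵀε, v⟫ + 2λ(‖βstar‖ - ‖βhat‖)`, and the choice of `λ` bounds
the noise term by `λ‖v‖`. Since the left side is nonnegative, this puts `v` in the error set `Ξ`;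
by the triangle inequality the right side is at most `3λ‖v‖`. On `Ξ` the restricted eigenvalue
and compatibility conditions turn this into `α‖v‖₂² ≤ 3λψ‖v‖₂`, which gives both bounds.
The dual norm is a genuine supremum because a norm on `ℝ^p` dominates a multiple of `‖·‖₂`.
-/

namespace Seminorm

variable {V : Type*} [NormedAddCommGroup V] [NormedSpace ℝ V] [FiniteDimensional ℝ V]

theorem continuous_of_finiteDimensional (q : Seminorm ℝ V) : Continuous q :=
  continuousOn_univ.mp (q.convexOn.continuousOn isOpen_univ)

theorem exists_pos_mul_norm_le (q : Seminorm ℝ V) (hq : ∀ x, q x = 0 → x = 0) :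
    ∃ m > 0, ∀ x, m * ‖x‖ ≤ q x := by
  obtain ⟨m, hm, hmq⟩ := (isCompact_sphere (0 : V) 1).exists_forall_le'
    q.continuous_of_finiteDimensional.continuousOn (a := 0) fun x hx =>
      (apply_nonneg q x).lt_of_ne' fun h => by simp [hq x h] at hx
  refine ⟨m, hm, fun x => ?_⟩
  rcases eq_or_ne x 0 with rfl | hx
  · simp
  have hx' : 0 < ‖x‖ := norm_pos_iff.mpr hx
  have hunit := hmq (‖x‖⁻¹ • x) (by simp [norm_smul, hx'.ne'])
  rwa [map_smul_eq_mul, norm_inv, norm_norm, le_inv_mul_iff₀ hx', mul_comm] at hunit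

end Seminorm

theorem inner_le_dualOf_mul {p : ℕ} (q : Seminorm ℝ (E p)) (hq : ∀ x, q x = 0 → x = 0)
    (θ v : E p) : inner ℝ θ v ≤ dualOf q θ * q v := by
  obtain ⟨m, hm, hmq⟩ := q.exists_pos_mul_norm_le hq
  have hbdd : BddAbove ((fun β => (inner ℝ θ β : ℝ)) '' {β | q β ≤ 1}) := by
    refine ⟨‖θ‖ * m⁻¹, ?_⟩
    rintro _ ⟨β, hβ, rfl⟩
    have hβm : ‖β‖ ≤ m⁻¹ := by
      rw [← one_div, le_div_iff₀ hm, mul_comm]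
      exact (hmq β).trans hβ
    exact (real_inner_le_norm θ β).trans (mul_le_mul_of_nonneg_left hβm (norm_nonneg θ))
  rcases (apply_nonneg q v).eq_or_lt with hv | hv
  · simp [hq v hv.symm]
  have hu : q ((q v)⁻¹ • v) ≤ 1 := by
    rw [map_smul_eq_mul, Real.norm_eq_abs, abs_inv, abs_of_pos hv, inv_mul_cancel₀ hv.ne']
  have hle : inner ℝ θ ((q v)⁻¹ • v) ≤ dualOf q θ := le_csSup hbdd ⟨_, hu, rfl⟩
  rwa [real_inner_smul_right, inv_mul_le_iff₀ hv, mul_comm] at hle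

theorem inner_mulVecE_transpose {n p : ℕ} (X : Matrix (Fin n) (Fin p) ℝ) (ε : E n) (v : E p) :
    inner ℝ (mulVecE X.transpose ε) v = inner ℝ ε (mulVecE X v) := by
  simp only [mulVecE, EuclideanSpace.inner_eq_star_dotProduct]
  simp [Matrix.dotProduct_mulVec, Matrix.vecMul_transpose, dotProduct_comm]

theorem basic_inequality {n p : ℕ} (X : Matrix (Fin n) (Fin p) ℝ) (βstar βhat : E p) (ε : E n)
    (N : E p → ℝ) (lam : ℝ)
    (hmin : (1 / (2 * n) : ℝ) * ‖mulVecE X βstar + ε - mulVecE X βhat‖ ^ 2 + lam * N βhat ≤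
      (1 / (2 * n) : ℝ) * ‖mulVecE X βstar + ε - mulVecE X βstar‖ ^ 2 + lam * N βstar) :
    (1 / n : ℝ) * ‖mulVecE X (βhat - βstar)‖ ^ 2 ≤
      inner ℝ (((2 : ℝ) / n) • mulVecE X.transpose ε) (βhat - βstar) +
        2 * lam * (N βstar - N βhat) := by
  have hres : mulVecE X βstar + ε - mulVecE X βhat = ε - mulVecE X (βhat - βstar) := by
    simp only [mulVecE, ← Matrix.toLpLin_apply, map_sub]
    abel
  rw [hres, add_sub_cancel_left, norm_sub_sq_real] at hmin
  rw [real_inner_smul_left, inner_mulVecE_transpose]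
  linear_combination 2 * hmin

theorem mem_errSet_and_prediction_le {n p : ℕ} (X : Matrix (Fin n) (Fin p) ℝ)
    (βstar βhat : E p) (ε : E n) (q : Seminorm ℝ (E p)) (hq : ∀ x, q x = 0 → x = 0)
    (lam : ℝ) (hlam0 : 0 < lam)
    (hmin : (1 / (2 * n) : ℝ) * ‖mulVecE X βstar + ε - mulVecE X βhat‖ ^ 2 + lam * q βhat ≤
      (1 / (2 * n) : ℝ) * ‖mulVecE X βstar + ε - mulVecE X βstar‖ ^ 2 + lam * q βstar)
    (hlam : lam ≥ dualOf q (((2 : ℝ) / n) • mulVecE X.transpose ε)) :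
    βhat - βstar ∈ errSet q βstar ∧
      (1 / n : ℝ) * ‖mulVecE X (βhat - βstar)‖ ^ 2 ≤ 3 * lam * q (βhat - βstar) := by
  have hbasic := basic_inequality X βstar βhat ε q lam hmin
  have hdual : inner ℝ (((2 : ℝ) / n) • mulVecE X.transpose ε) (βhat - βstar) ≤
      lam * q (βhat - βstar) :=
    (inner_le_dualOf_mul q hq _ _).trans (mul_le_mul_of_nonneg_right hlam (apply_nonneg _ _))
  have hpred : 0 ≤ (1 / n : ℝ) * ‖mulVecE X (βhat - βstar)‖ ^ 2 := by positivity
  have hcone : 0 ≤ q (βhat - βstar) + 2 * (q βstar - q βhat) :=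
    (mul_nonneg_iff_of_pos_left hlam0).mp (by linarith)
  have htri : q βstar ≤ q βhat + q (βhat - βstar) := le_map_add_map_sub' q βstar βhat
  refine ⟨?_, ?_⟩
  · change (1 / 2 : ℝ) * q _ + q βstar ≥ q (βstar + (βhat - βstar))
    rw [add_sub_cancel]
    linarith
  · linarith [mul_le_mul_of_nonneg_left htri hlam0.le]

theorem le_div_of_mul_sq_le_mul {a b t : ℝ} (ha : 0 < a) (hb : 0 ≤ b) (h : a * t ^ 2 ≤ b * t) :
    t ≤ b / a := by
  rw [le_div_iff₀ ha]
  rcases lt_trichotomy t 0 with ht | ht | ht <;> nlinarith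

theorem estimation_error_general (n p : ℕ) (X : Matrix (Fin n) (Fin p) ℝ) (βstar : E p) (ε : E n)
    (N : E p → ℝ)
    (Ntriangle : ∀ x z : E p, N (x + z) ≤ N x + N z)
    (Nsmul : ∀ (a : ℝ) (x : E p), N (a • x) = |a| * N x)
    (Ndefinite : ∀ x : E p, N x = 0 → x = 0)
    (lam : ℝ) (hlam0 : 0 < lam)
    (y : E n) (hy : y = mulVecE X βstar + ε)
    (βhat : E p)
    (hmin : ∀ β : E p,
      (1 / (2 * n) : ℝ) * ‖y - mulVecE X βhat‖ ^ 2 + lam * N βhat ≤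
        (1 / (2 * n) : ℝ) * ‖y - mulVecE X β‖ ^ 2 + lam * N β)
    (hlam : lam ≥ dualOf N (((2 : ℝ) / n) • mulVecE X.transpose ε))
    (alpha : ℝ) (halpha : 0 < alpha)
    (hRE : ∀ u ∈ errSet N βstar, (1 / n : ℝ) * ‖mulVecE X u‖ ^ 2 ≥ alpha * ‖u‖ ^ 2)
    (psi : ℝ) (hpsi0 : 0 ≤ psi)
    (hcompat : ∀ u ∈ errSet N βstar, N u ≤ psi * ‖u‖) :
    N (βhat - βstar) ≤ 3 * lam * psi ^ 2 / alpha ∧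
      ‖βhat - βstar‖ ≤ 3 * lam * psi / alpha := by
  subst hy
  obtain ⟨q, rfl⟩ : ∃ q : Seminorm ℝ (E p), ⇑q = N :=
    ⟨Seminorm.of N Ntriangle (by simpa only [Real.norm_eq_abs] using Nsmul), rfl⟩
  obtain ⟨hmem, hpred⟩ :=
    mem_errSet_and_prediction_le X βstar βhat ε q Ndefinite lam hlam0 (hmin βstar) hlam
  have herr : ‖βhat - βstar‖ ≤ 3 * lam * psi / alpha := by
    refine le_div_of_mul_sq_le_mul halpha (by positivity) ?_
    calc alpha * ‖βhat - βstar‖ ^ 2 ≤ (1 / n) * ‖mulVecE X (βhat - βstar)‖ ^ 2 := hRE _ hmem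
      _ ≤ 3 * lam * q (βhat - βstar) := hpred
      _ ≤ 3 * lam * (psi * ‖βhat - βstar‖) := by gcongr; exact hcompat _ hmem
      _ = 3 * lam * psi * ‖βhat - βstar‖ := by ring
  refine ⟨?_, herr⟩
  calc q (βhat - βstar) ≤ psi * ‖βhat - βstar‖ := hcompat _ hmem
    _ ≤ psi * (3 * lam * psi / alpha) := by gcongr
    _ = 3 * lam * psi ^ 2 / alpha := by ring

/-- estimation error bounds for the regularized least-squares
minimizer under restricted eigenvalue and restricted norm compatibility conditions
over the error set `Ξ`. -/
theorem estimation_error (n p : ℕ) (hn : 1 ≤ n) (hp : 1 ≤ p)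
    (X : Matrix (Fin n) (Fin p) ℝ) (βstar : E p) (ε : E n)
    (N : E p → ℝ)
    (Ntriangle : ∀ x z : E p, N (x + z) ≤ N x + N z)
    (Nsmul : ∀ (a : ℝ) (x : E p), N (a • x) = |a| * N x)
    (Ndefinite : ∀ x : E p, N x = 0 → x = 0)
    (lam : ℝ) (hlam0 : 0 < lam)
    (y : E n) (hy : y = mulVecE X βstar + ε)
    (βhat : E p)
    (hmin : ∀ β : E p,
      (1 / (2 * n) : ℝ) * ‖y - mulVecE X βhat‖ ^ 2 + lam * N βhat ≤
        (1 / (2 * n) : ℝ) * ‖y - mulVecE X β‖ ^ 2 + lam * N β)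
    (hlam : lam ≥ dualOf N (((2 : ℝ) / n) • mulVecE X.transpose ε))
    (alpha : ℝ) (halpha : 0 < alpha)
    (hRE : ∀ u ∈ errSet N βstar, (1 / n : ℝ) * ‖mulVecE X u‖ ^ 2 ≥ alpha * ‖u‖ ^ 2)
    (psi : ℝ) (hpsi0 : 0 ≤ psi)
    (hcompat : ∀ u ∈ errSet N βstar, N u ≤ psi * ‖u‖) :
    N (βhat - βstar) ≤ 3 * lam * psi ^ 2 / alpha ∧
      ‖βhat - βstar‖ ≤ 3 * lam * psi / alpha :=
  estimation_error_general n p X βstar ε N Ntriangle Nsmul Ndefinite lam hlam0 y hy βhat hmin hlam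
    alpha halpha hRE psi hpsi0 hcompat

end
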